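/- arXiv:1401.2471 — 2 statements merged into one kernel-verified Lean document; each statement's English description precedes it below -/
import Mathlib

section
/- Let q ≥ 2 and let G = N(2,q) be the free nilpotent group of class 2 and rank q with generators a_1,…,a_q. For every y ∈ G, one has ⁅a_1, y⁆ = 1 if and only if y belongs to the subgroup of G generated by a_1 together with the commutator subgroup ⁅G,G⁆; equivalently, the centralizer of a_1 in G is the subgroup generated by {a_1} ∪ ⁅G,G⁆. -/
/-- The free nilpotent group `N(p,q)` of class `p` and rank `q`: the quotient of the free
group on `q` generators by the `p`-th term of its lower central series. -/
def FreeNilpotent (p q : ℕ) : Type :=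
  FreeGroup (Fin q) ⧸ (⊤ : Subgroup (FreeGroup (Fin q))).lowerCentralSeries p

instance (p q : ℕ) : Group (FreeNilpotent p q) :=
  QuotientGroup.Quotient.group _

/-- The images `a_1, …, a_q` in `N(p,q)` of the free generators `e_1, …, e_q`. -/
def FreeNilpotent.gen (p q : ℕ) (i : Fin q) : FreeNilpotent p q :=
  QuotientGroup.mk (FreeGroup.of i)

open scoped commutatorElement

@[ext] structure Heis : Type where
  a : ℤ
  b : ℤ
  c : ℤ

namespace Heis

instance : Mul Heis := ⟨fun x y => ⟨x.a + y.a, x.b + y.b, x.c + y.c + x.a * y.b⟩⟩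
instance : One Heis := ⟨⟨0, 0, 0⟩⟩
instance : Inv Heis := ⟨fun x => ⟨-x.a, -x.b, x.a * x.b - x.c⟩⟩

@[simp] lemma mul_a (x y : Heis) : (x * y).a = x.a + y.a := rfl
@[simp] lemma mul_b (x y : Heis) : (x * y).b = x.b + y.b := rfl
@[simp] lemma mul_c (x y : Heis) : (x * y).c = x.c + y.c + x.a * y.b := rfl
@[simp] lemma one_a : (1 : Heis).a = 0 := rfl
@[simp] lemma one_b : (1 : Heis).b = 0 := rfl
@[simp] lemma one_c : (1 : Heis).c = 0 := rfl
@[simp] lemma inv_a (x : Heis) : (x⁻¹).a = -x.a := rfl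
@[simp] lemma inv_b (x : Heis) : (x⁻¹).b = -x.b := rfl
@[simp] lemma inv_c (x : Heis) : (x⁻¹).c = x.a * x.b - x.c := rfl

instance : Group Heis where
  mul_assoc x y z := by ext <;> simp <;> ring
  one_mul x := by ext <;> simp
  mul_one x := by ext <;> simp
  inv_mul_cancel x := by ext <;> simp <;> ring

lemma commutatorElement_eq (x y : Heis) :
    ⁅x, y⁆ = ⟨0, 0, x.a * y.b - y.a * x.b⟩ := by
  ext <;> simp [commutatorElement_def] <;> ring

/-- The subgroup of elements of the form `(0,0,*)`. -/
def zed : Subgroup Heis where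
  carrier := {x | x.a = 0 ∧ x.b = 0}
  one_mem' := ⟨rfl, rfl⟩
  mul_mem' := by rintro x y ⟨h1, h2⟩ ⟨h3, h4⟩; exact ⟨by simp [h1, h3], by simp [h2, h4]⟩
  inv_mem' := by rintro x ⟨h1, h2⟩; exact ⟨by simp [h1], by simp [h2]⟩

lemma lcs_two : (⊤ : Subgroup Heis).lowerCentralSeries 2 = ⊥ := by
  have h1 : (⊤ : Subgroup Heis).lowerCentralSeries 1 ≤ zed := by
    show ⁅(⊤ : Subgroup Heis), ⊤⁆ ≤ zed
    rw [Subgroup.commutator_le]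
    intro g _ h _
    rw [commutatorElement_eq]
    exact ⟨rfl, rfl⟩
  have h2 : (⊤ : Subgroup Heis).lowerCentralSeries 2 ≤ ⁅zed, (⊤ : Subgroup Heis)⁆ :=
    Subgroup.commutator_mono h1 le_rfl
  refine le_bot_iff.mp (h2.trans ?_)
  rw [Subgroup.commutator_le]
  rintro g ⟨hga, hgb⟩ h _
  rw [commutatorElement_eq, Subgroup.mem_bot, hga, hgb]
  ext <;> simp

/-- projection onto the `a`-coordinate. -/
def aHom : Heis →* Multiplicative ℤ where
  toFun x := Multiplicative.ofAdd x.a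
  map_one' := rfl
  map_mul' _ _ := rfl

/-- projection onto the `b`-coordinate. -/
def bHom : Heis →* Multiplicative ℤ where
  toFun x := Multiplicative.ofAdd x.b
  map_one' := rfl
  map_mul' _ _ := rfl

end Heis

namespace FreeNilpotentAux

variable {q : ℕ}

/-- The quotient map. -/
def pr (q : ℕ) : FreeGroup (Fin q) →* FreeNilpotent 2 q :=
  QuotientGroup.mk' _

lemma pr_surjective : Function.Surjective (pr q) :=
  QuotientGroup.mk'_surjective _

lemma gen_eq (i : Fin q) : FreeNilpotent.gen 2 q i = pr q (FreeGroup.of i) := rfl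

lemma lcs_two : (⊤ : Subgroup (FreeNilpotent 2 q)).lowerCentralSeries 2 = ⊥ := by
  have h1 : (⊤ : Subgroup (FreeNilpotent 2 q)).lowerCentralSeries 2 =
      Subgroup.map (pr q) ((⊤ : Subgroup (FreeGroup (Fin q))).lowerCentralSeries 2) := by
    show ⁅⁅(⊤ : Subgroup (FreeNilpotent 2 q)), ⊤⁆, ⊤⁆ =
      Subgroup.map (pr q) ⁅⁅(⊤ : Subgroup (FreeGroup (Fin q))), ⊤⁆, ⊤⁆
    rw [Subgroup.map_commutator, Subgroup.map_commutator,
      Subgroup.map_top_of_surjective _ pr_surjective]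
  rw [h1, eq_bot_iff]
  rintro g ⟨x, hx, rfl⟩
  have : x ∈ (pr q).ker := by
    exact (QuotientGroup.eq_one_iff (N := (⊤ : Subgroup (FreeGroup (Fin q))).lowerCentralSeries 2) x).mpr hx
  simpa [Subgroup.mem_bot] using this

lemma comm_eq_one_of_mem_commutator {g : FreeNilpotent 2 q}
    (hg : g ∈ commutator (FreeNilpotent 2 q)) (x : FreeNilpotent 2 q) : ⁅g, x⁆ = 1 := by
  have h : ⁅g, x⁆ ∈ (⊤ : Subgroup (FreeNilpotent 2 q)).lowerCentralSeries 2 := by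
    show ⁅g, x⁆ ∈ ⁅(⊤ : Subgroup (FreeNilpotent 2 q)).lowerCentralSeries 1, ⊤⁆
    exact Subgroup.commutator_mem_commutator hg (Subgroup.mem_top x)
  rwa [lcs_two, Subgroup.mem_bot] at h

/-- Homomorphisms out of the free two-step nilpotent group are determined by values on
the generators. -/
lemma hom_ext {M : Type*} [Group M] {φ ψ : FreeNilpotent 2 q →* M}
    (h : ∀ i, φ (FreeNilpotent.gen 2 q i) = ψ (FreeNilpotent.gen 2 q i)) : φ = ψ := by
  have h2 : φ.comp (pr q) = ψ.comp (pr q) := by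
    apply FreeGroup.ext_hom; intro i; exact h i
  ext y
  obtain ⟨x, rfl⟩ := pr_surjective y
  exact DFunLike.congr_fun h2 x

/-- The homomorphism to the Heisenberg group determined by arbitrary values on generators. -/
def toHeis (f : Fin q → Heis) : FreeNilpotent 2 q →* Heis :=
  QuotientGroup.lift _ (FreeGroup.lift f) (by
    intro x hx
    have h : FreeGroup.lift f x ∈
        Subgroup.map (FreeGroup.lift f) ((⊤ : Subgroup (FreeGroup (Fin q))).lowerCentralSeries 2) :=
      ⟨x, hx, rfl⟩
    have h2 : FreeGroup.lift f x ∈ (⊤ : Subgroup Heis).lowerCentralSeries 2 := by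
      rw [Subgroup.map_lowerCentralSeries] at h
      exact Subgroup.commutator_mono (Subgroup.commutator_mono le_top le_top) le_top h
    rw [Heis.lcs_two, Subgroup.mem_bot] at h2
    simpa [MonoidHom.mem_ker] using h2)

@[simp] lemma toHeis_gen (f : Fin q → Heis) (i : Fin q) :
    toHeis f (FreeNilpotent.gen 2 q i) = f i := by
  show QuotientGroup.lift _ (FreeGroup.lift f) _ (QuotientGroup.mk (FreeGroup.of i)) = f i
  rw [QuotientGroup.lift_mk]
  simp

/-- The abelianization-type homomorphism on the free group. -/
noncomputable def abF (q : ℕ) : FreeGroup (Fin q) →* Multiplicative (Fin q →₀ ℤ) :=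
  FreeGroup.lift fun i => Multiplicative.ofAdd (Finsupp.single i 1)

/-- The abelianization-type homomorphism. -/
noncomputable def ab (q : ℕ) : FreeNilpotent 2 q →* Multiplicative (Fin q →₀ ℤ) :=
  QuotientGroup.lift _ (abF q) (by
    intro x hx
    have hle : (⊤ : Subgroup (FreeGroup (Fin q))).lowerCentralSeries 2 ≤
        (⊤ : Subgroup (FreeGroup (Fin q))).lowerCentralSeries 1 :=
      Subgroup.lowerCentralSeries_antitone _ (by norm_num)
    rw [Subgroup.top_lowerCentralSeries_one] at hle
    exact Abelianization.commutator_subset_ker (abF q) (hle hx))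

@[simp] lemma ab_gen (i : Fin q) :
    ab q (FreeNilpotent.gen 2 q i) = Multiplicative.ofAdd (Finsupp.single i 1) := by
  show QuotientGroup.lift _ (abF q) _ (QuotientGroup.mk (FreeGroup.of i)) = _
  rw [QuotientGroup.lift_mk]
  simp [abF]

/-- Elements in the kernel of `ab` lie in the commutator subgroup. -/
lemma mem_commutator_of_ab_eq_one {z : FreeNilpotent 2 q} (hz : ab q z = 1) :
    z ∈ commutator (FreeNilpotent 2 q) := by
  obtain ⟨w, rfl⟩ := pr_surjective z
  -- transfer to the free group
  have hw : abF q w = 1 := hz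
  -- the induced map on the abelianization of the free group
  set h : Abelianization (FreeGroup (Fin q)) →* Multiplicative (Fin q →₀ ℤ) :=
    Abelianization.lift (abF q) with hh
  -- a left inverse for h
  set g : Multiplicative (Fin q →₀ ℤ) →* Abelianization (FreeGroup (Fin q)) :=
    AddMonoidHom.toMultiplicativeLeft
      (Finsupp.liftAddHom fun i =>
        zmultiplesHom _ (Additive.ofMul (Abelianization.of (FreeGroup.of i)))) with hg
  have hgh : ∀ w : FreeGroup (Fin q), g (h (Abelianization.of w)) = Abelianization.of w := by
    intro w
    have : (g.comp h).comp Abelianization.of = (Abelianization.of :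
        FreeGroup (Fin q) →* Abelianization (FreeGroup (Fin q))) := by
      apply FreeGroup.ext_hom
      intro i
      simp [hg, hh, abF, AddMonoidHom.coe_toMultiplicativeLeft]
    exact DFunLike.congr_fun this w
  have h1 : Abelianization.of w = 1 := by
    have := hgh w
    rw [Abelianization.lift_apply_of] at this
    rw [hw] at this
    simpa using this.symm
  have hwc : w ∈ commutator (FreeGroup (Fin q)) := by
    have : (QuotientGroup.mk w : FreeGroup (Fin q) ⧸ commutator (FreeGroup (Fin q))) = 1 := h1
    rwa [QuotientGroup.eq_one_iff] at this
  -- push forward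
  have : pr q w ∈ Subgroup.map (pr q) (commutator (FreeGroup (Fin q))) :=
    ⟨w, hwc, rfl⟩
  rw [commutator_def, Subgroup.map_commutator, Subgroup.map_top_of_surjective _ pr_surjective]
    at this
  exact this

end FreeNilpotentAux

namespace FreeNilpotentAux

variable {q : ℕ}

/-- Coordinate projection. -/
def coordHom (j : Fin q) : Multiplicative (Fin q →₀ ℤ) →* Multiplicative ℤ where
  toFun x := Multiplicative.ofAdd (Multiplicative.toAdd x j)
  map_one' := rfl
  map_mul' x y := by
    show Multiplicative.ofAdd ((Multiplicative.toAdd x + Multiplicative.toAdd y) j) = _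
    rw [Finsupp.add_apply]
    rfl

/-- generator values for the Heisenberg detection homomorphism -/
def hf (i0 j : Fin q) : Fin q → Heis :=
  fun i => if i = i0 then ⟨1, 0, 0⟩ else if i = j then ⟨0, 1, 0⟩ else 1

lemma coord_eq_b (i0 j : Fin q) (hj : j ≠ i0) :
    (coordHom j).comp (ab q) = Heis.bHom.comp (toHeis (hf i0 j)) := by
  apply hom_ext
  intro i
  simp only [MonoidHom.comp_apply, ab_gen, toHeis_gen]
  show Multiplicative.ofAdd (Finsupp.single i 1 j) = Multiplicative.ofAdd ((hf i0 j i).b)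
  by_cases h1 : i = i0
  · subst h1
    rw [Finsupp.single_apply, if_neg (fun h => hj h.symm)]
    simp [hf]
  · by_cases h2 : i = j
    · subst h2
      rw [Finsupp.single_apply, if_pos rfl]
      simp [hf, h1]
    · rw [Finsupp.single_apply, if_neg h2]
      simp [hf, h1, h2]

lemma coord_eq_a (i0 i1 : Fin q) (h10 : i1 ≠ i0) :
    (coordHom i0).comp (ab q) = Heis.aHom.comp (toHeis (hf i0 i1)) := by
  apply hom_ext
  intro i
  simp only [MonoidHom.comp_apply, ab_gen, toHeis_gen]
  show Multiplicative.ofAdd (Finsupp.single i 1 i0) = Multiplicative.ofAdd ((hf i0 i1 i).a)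
  by_cases h1 : i = i0
  · subst h1
    rw [Finsupp.single_apply, if_pos rfl]
    simp [hf]
  · by_cases h2 : i = i1
    · subst h2
      rw [Finsupp.single_apply, if_neg h10]
      simp [hf, h1]
    · rw [Finsupp.single_apply, if_neg h1]
      simp [hf, h1, h2]

end FreeNilpotentAux

section
open FreeNilpotentAux

/-- In `N(2,q)` (`q ≥ 2`), an element commutes with the generator `a_1` iff it lies in the
subgroup generated by `a_1` together with the commutator subgroup; i.e. the centralizer of
`a_1` is the subgroup generated by `{a_1} ∪ ⁅G,G⁆`. -/
theorem centralizer_of_generator_free_nilpotent_two_step (q : ℕ) (hq : 2 ≤ q)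
    (y : FreeNilpotent 2 q) :
    ⁅FreeNilpotent.gen 2 q ⟨0, by omega⟩, y⁆ = 1 ↔
      y ∈ Subgroup.closure
        ({FreeNilpotent.gen 2 q ⟨0, by omega⟩} ∪
          (commutator (FreeNilpotent 2 q) : Set (FreeNilpotent 2 q))) := by
  have hq0 : 0 < q := by omega
  have hq1 : 1 < q := by omega
  set i0 : Fin q := ⟨0, by omega⟩ with hi0
  set i1 : Fin q := ⟨1, by omega⟩ with hi1
  have h10 : i1 ≠ i0 := by simp [hi0, hi1, Fin.ext_iff]
  constructor
  · intro hy
    -- all coordinates `j ≠ i0` of the abelianization of `y` vanish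
    have hbj : ∀ j : Fin q, j ≠ i0 → Multiplicative.toAdd (ab q y) j = 0 := by
      intro j hj
      have hc := congrArg (toHeis (hf i0 j)) hy
      rw [map_commutatorElement, map_one, toHeis_gen] at hc
      have hXf : hf i0 j i0 = ⟨1, 0, 0⟩ := if_pos rfl
      rw [hXf, Heis.commutatorElement_eq] at hc
      have hb : (toHeis (hf i0 j) y).b = 0 := by
        have := congrArg Heis.c hc
        simpa using this
      have h2 := DFunLike.congr_fun (coord_eq_b i0 j hj) y
      simp only [MonoidHom.comp_apply] at h2
      have h3 : (coordHom j) (ab q y) = Multiplicative.ofAdd ((toHeis (hf i0 j) y).b) := by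
        rw [h2]; rfl
      have h4 := congrArg Multiplicative.toAdd h3
      simpa [coordHom, hb] using h4
    -- the `i0` coordinate
    set n : ℤ := Multiplicative.toAdd (ab q y) i0 with hn
    have hab : Multiplicative.toAdd (ab q y) = Finsupp.single i0 n := by
      ext j
      by_cases hj : j = i0
      · subst hj; rw [Finsupp.single_apply, if_pos rfl]
      · rw [Finsupp.single_apply, if_neg (fun h => hj h.symm), hbj j hj]
    set z : FreeNilpotent 2 q := y * (FreeNilpotent.gen 2 q i0) ^ (-n) with hz
    have habz : ab q z = 1 := by
      have h5 : Multiplicative.toAdd (ab q z) = 0 := by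
        rw [hz, map_mul, map_zpow, toAdd_mul, toAdd_zpow, hab, ab_gen]
        simp [Finsupp.smul_single, ← Finsupp.single_add]
      have := congrArg Multiplicative.ofAdd h5
      simpa using this
    have hzc : z ∈ commutator (FreeNilpotent 2 q) := mem_commutator_of_ab_eq_one habz
    have hy2 : y = z * (FreeNilpotent.gen 2 q i0) ^ n := by
      rw [hz, mul_assoc, ← zpow_add, neg_add_cancel, zpow_zero, mul_one]
    rw [hy2]
    exact Subgroup.mul_mem _
      (Subgroup.subset_closure (Set.mem_union_right _ hzc))
      (Subgroup.zpow_mem _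
        (Subgroup.subset_closure (Set.mem_union_left _ (Set.mem_singleton _))) n)
  · intro hy
    have hle : Subgroup.closure
        ({FreeNilpotent.gen 2 q i0} ∪
          (commutator (FreeNilpotent 2 q) : Set (FreeNilpotent 2 q))) ≤
        Subgroup.centralizer {FreeNilpotent.gen 2 q i0} := by
      rw [Subgroup.closure_le]
      rintro x (hx | hx)
      · rw [Set.mem_singleton_iff] at hx
        subst hx
        rw [SetLike.mem_coe, Subgroup.mem_centralizer_iff]
        rintro g hg
        rw [Set.mem_singleton_iff] at hg
        subst hg
        rfl
      · rw [SetLike.mem_coe, Subgroup.mem_centralizer_iff]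
        rintro g hg
        have := commutatorElement_eq_one_iff_commute.mp
          (comm_eq_one_of_mem_commutator hx g)
        exact this.symm.eq
    have h2 := hle hy
    rw [Subgroup.mem_centralizer_iff] at h2
    have h3 := h2 _ (Set.mem_singleton (FreeNilpotent.gen 2 q i0))
    exact commutatorElement_eq_one_iff_commute.mpr h3

end
end

section
/- Let p ≥ 3, q ≥ 2, let G = N(p,q) be the free nilpotent group of class p and rank q with generators a_1,…,a_q, write a = a_1, b = a_2, and let R be the left-nested iterated commutator ⁅a, b, b, …, b⁆ with p − 2 entries in total (so R = a when p = 3). Let n, m : ℕ and let α : Fin n → ℤ, β : Fin n → Fin m → ℤ, γ : Fin n → Fin m → Fin m → ℤ. Then the following are equivalent: (i) there exists y : Fin m → G such that for all i, ⁅R,b,b⁆^(α i) · ∏_j ⁅R, b, y j⁆^(β i j) · ∏_{j,k} ⁅R, y j, y k⁆^(γ i j k) = 1 (all of these factors lie in the central subgroup lowerCentralSeries G (p−1), so the order of the products is immaterial); (ii) there exists x : Fin m → ℤ such that for all i, α i + ∑_j (β i j) * x j + ∑_{j,k} (γ i j k) * x j * x k = 0. -/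
open scoped commutatorElement

/-- The left-nested iterated commutator `⁅x₁, …, xₙ⁆ = ⁅⁅…⁅⁅x₁,x₂⁆,x₃⁆,…⁆,xₙ⁆` of a list of
group elements (by convention `1` for the empty list, and `x` for the singleton list `[x]`). -/
def nestedCommutator {G : Type*} [Group G] : List G → G
  | [] => 1
  | x :: xs => xs.foldl (fun u v => ⁅u, v⁆) x

namespace FNEnc

lemma lcs_succ' {G : Type*} [Group G] (n : ℕ) :
    (⊤ : Subgroup G).lowerCentralSeries (n + 1) = ⁅(⊤ : Subgroup G).lowerCentralSeries n, ⊤⁆ := rfl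

abbrev V (p : ℕ) := Fin p → ℤ

variable {p : ℕ}

def S : V p →+ V p where
  toFun v i := if h : (i : ℕ) = 0 then 0 else v ⟨(i : ℕ) - 1, lt_of_le_of_lt (Nat.sub_le _ _) i.2⟩
  map_zero' := by funext i; by_cases h : (i : ℕ) = 0 <;> simp [h]
  map_add' a b := by funext i; by_cases h : (i : ℕ) = 0 <;> simp [h]

def e (p k : ℕ) : V p := fun i => if (i : ℕ) = k then 1 else 0

lemma S_e (k : ℕ) : S (e p k) = e p (k + 1) := by
  funext i
  simp only [S, AddMonoidHom.coe_mk, ZeroHom.coe_mk, e]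
  by_cases h : (i : ℕ) = 0
  · rw [dif_pos h, if_neg (by omega)]
  · rw [dif_neg h]
    by_cases h2 : (i : ℕ) = k + 1
    · rw [if_pos (show (i : ℕ) - 1 = k by omega), if_pos h2]
    · rw [if_neg (show ¬((i : ℕ) - 1 = k) by omega), if_neg h2]

lemma e_zero_of_ge (k : ℕ) (hk : p ≤ k) : e p k = 0 := by
  funext i; exact if_neg (by have := i.2; omega)

lemma S_iter_vanish : ∀ (k : ℕ) (v : V p) (i : Fin p), (i : ℕ) < k → (⇑(S : V p →+ V p))^[k] v i = 0 := by
  intro k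
  induction k with
  | zero => intro v i h; omega
  | succ k ih =>
    intro v i h
    rw [Function.iterate_succ_apply']
    show (S _) i = 0
    simp only [S, AddMonoidHom.coe_mk, ZeroHom.coe_mk]
    by_cases h0 : (i : ℕ) = 0
    · rw [dif_pos h0]
    · rw [dif_neg h0]
      exact ih _ _ (show (i : ℕ) - 1 < k by omega)

lemma S_iter_p (v : V p) : (⇑(S : V p →+ V p))^[p] v = 0 :=
  funext fun i => S_iter_vanish p v i i.2

instance autGroup : Group (AddAut (V p)) where
  mul g h := AddEquiv.trans h g
  one := AddEquiv.refl _
  inv := AddEquiv.symm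
  mul_assoc _ _ _ := rfl
  one_mul _ := rfl
  mul_one _ := rfl
  inv_mul_cancel := AddEquiv.self_trans_symm

@[simp] lemma autGroup_one_apply (v : V p) : (1 : AddAut (V p)) v = v := rfl
@[simp] lemma autGroup_mul_apply (e₁ e₂ : AddAut (V p)) (v : V p) :
    (e₁ * e₂) v = e₁ (e₂ v) := rfl

def σ : AddAut (V p) where
  toFun v := v - S v
  invFun v := ∑ k ∈ Finset.range p, (⇑(S : V p →+ V p))^[k] v
  left_inv v := by
    change (∑ k ∈ Finset.range p, (⇑(S : V p →+ V p))^[k] (v - S v)) = v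
    have : ∀ k, (⇑(S : V p →+ V p))^[k] (v - S v)
        = (⇑(S : V p →+ V p))^[k] v - (⇑(S : V p →+ V p))^[k + 1] v := by
      intro k
      rw [iterate_map_sub, Function.iterate_succ_apply]
    simp only [this]
    rw [Finset.sum_range_sub']
    simp [S_iter_p]
  right_inv v := by
    change (∑ k ∈ Finset.range p, (⇑(S : V p →+ V p))^[k] v)
      - S (∑ k ∈ Finset.range p, (⇑(S : V p →+ V p))^[k] v) = v
    rw [map_sum]
    have : ∀ k, S ((⇑(S : V p →+ V p))^[k] v) = (⇑(S : V p →+ V p))^[k + 1] v := by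
      intro k; rw [Function.iterate_succ_apply']
    simp only [this]
    rw [← Finset.sum_sub_distrib, Finset.sum_range_sub']
    simp [S_iter_p]
  map_add' a b := by simp [map_add]; abel

lemma σ_apply (v : V p) : σ v = v - S v := rfl
lemma S_σ_comm (v : V p) : S (σ v) = σ (S v) := by
  simp [σ_apply, map_sub]

lemma σ_zpow_succ (c : ℤ) (v : V p) :
    (σ ^ (c + 1) : AddAut (V p)) v = σ ((σ ^ c : AddAut (V p)) v) := by
  rw [show c + 1 = 1 + c by ring, zpow_add, zpow_one]
  rfl

lemma σ_zpow_pred (c : ℤ) (v w : V p) (h : σ w = (σ ^ c : AddAut (V p)) v) :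
    (σ ^ (c - 1) : AddAut (V p)) v = w := by
  apply (σ : AddAut (V p)).injective
  rw [← σ_zpow_succ, sub_add_cancel, h]

lemma σ_zpow_fix (c : ℤ) (v : V p) (hv : S v = 0) : (σ ^ c : AddAut (V p)) v = v := by
  induction c using Int.induction_on with
  | zero => simp
  | succ i ih => rw [σ_zpow_succ, ih, σ_apply, hv, sub_zero]
  | pred i ih => exact σ_zpow_pred _ _ _ (by rw [ih, σ_apply, hv, sub_zero])

lemma σ_zpow_lin (c : ℤ) (v : V p) (hv : S (S v) = 0) :
    (σ ^ c : AddAut (V p)) v = v - c • S v := by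
  induction c using Int.induction_on with
  | zero => simp
  | succ i ih =>
    rw [σ_zpow_succ, ih, σ_apply, map_sub, map_zsmul, hv]
    push_cast
    module
  | pred i ih =>
    apply σ_zpow_pred
    rw [ih, σ_apply, map_sub, map_zsmul, hv]
    push_cast
    module

lemma σ_zpow_quad (c : ℤ) (v : V p) (hv : S (S (S v)) = 0) :
    ∃ d : ℤ, (σ ^ c : AddAut (V p)) v = v - c • S v + d • S (S v) := by
  induction c using Int.induction_on with
  | zero => exact ⟨0, by simp⟩
  | succ i ih =>
    obtain ⟨d, hd⟩ := ih
    refine ⟨d + i, ?_⟩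
    rw [σ_zpow_succ, hd, σ_apply, map_add, map_sub, map_zsmul, map_zsmul, hv]
    push_cast
    module
  | pred i ih =>
    obtain ⟨d, hd⟩ := ih
    refine ⟨d + i + 1, ?_⟩
    apply σ_zpow_pred
    rw [hd, σ_apply, map_add, map_sub, map_zsmul, map_zsmul, hv]
    push_cast
    module

lemma σ_zpow_S_comm (c : ℤ) (v : V p) :
    S ((σ ^ c : AddAut (V p)) v) = (σ ^ c : AddAut (V p)) (S v) := by
  induction c using Int.induction_on with
  | zero => simp
  | succ i ih => rw [σ_zpow_succ, S_σ_comm, ih, σ_zpow_succ]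
  | pred i ih =>
    have h1 : σ ((σ ^ (-(i : ℤ) - 1) : AddAut (V p)) v) = (σ ^ (-(i : ℤ)) : AddAut (V p)) v := by
      rw [← σ_zpow_succ]; norm_num
    have h2 : σ ((σ ^ (-(i : ℤ) - 1) : AddAut (V p)) (S v))
        = (σ ^ (-(i : ℤ)) : AddAut (V p)) (S v) := by
      rw [← σ_zpow_succ]; norm_num
    apply (σ : AddAut (V p)).injective
    rw [← S_σ_comm, h1, ih, ← h2]

lemma σ_zpow_sub_range (c : ℤ) (v : V p) :
    ∃ u, (σ ^ c : AddAut (V p)) v = v + S u := by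
  induction c using Int.induction_on with
  | zero => exact ⟨0, by simp⟩
  | succ i ih =>
    obtain ⟨u, hu⟩ := ih
    refine ⟨u - (σ ^ (i : ℤ) : AddAut (V p)) v, ?_⟩
    rw [σ_zpow_succ, σ_apply, hu, map_sub]
    abel
  | pred i ih =>
    obtain ⟨u, hu⟩ := ih
    refine ⟨u + (σ ^ (-(i : ℤ) - 1) : AddAut (V p)) v, ?_⟩
    have h1 : σ ((σ ^ (-(i : ℤ) - 1) : AddAut (V p)) v) = (σ ^ (-(i : ℤ)) : AddAut (V p)) v := by
      rw [← σ_zpow_succ]; norm_num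
    rw [σ_apply, hu] at h1
    rw [map_add]
    conv_lhs => rw [sub_eq_iff_eq_add.mp h1]
    abel

open SemidirectProduct Multiplicative

def φp (p : ℕ) : Multiplicative ℤ →* MulAut (Multiplicative (V p)) where
  toFun c := AddEquiv.toMultiplicative (σ ^ c.toAdd : AddAut (V p))
  map_one' := by
    ext x
    simp [AddEquiv.toMultiplicative]
  map_mul' a b := by
    ext x
    simp [AddEquiv.toMultiplicative, toAdd_mul, zpow_add]

abbrev Hgrp (p : ℕ) := SemidirectProduct (Multiplicative (V p)) (Multiplicative ℤ) (φp p)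

lemma φp_apply (p : ℕ) (c : Multiplicative ℤ) (v : V p) :
    φp p c (ofAdd v) = ofAdd ((σ ^ c.toAdd : AddAut (V p)) v) := rfl

variable {p : ℕ}

lemma conj_inl (h : Hgrp p) (x : Multiplicative (V p)) :
    h * inl x * h⁻¹ = inl (φp p h.right x) := by
  have h1 : h * inl x * h⁻¹
      = inl h.left * (inr h.right * inl x * (inr h.right)⁻¹) * (inl h.left)⁻¹ := by
    conv_lhs => rw [← inl_left_mul_inr_right h]
    group
  rw [h1, ← map_inv, ← inl_aut, ← map_inv, ← map_mul, ← map_mul]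
  congr 1
  rw [mul_comm h.left, mul_assoc, mul_inv_cancel, mul_one]

lemma comm_inl (x : Multiplicative (V p)) (h : Hgrp p) :
    ⁅(inl x : Hgrp p), h⁆ = inl (x * (φp p h.right x)⁻¹) := by
  have h1 : ⁅(inl x : Hgrp p), h⁆ = inl x * (h * inl x⁻¹ * h⁻¹) := by
    rw [commutatorElement_def, map_inv]
    group
  rw [h1, conj_inl, map_inv, ← map_mul, ← map_inv]

lemma comm_inl' (w : V p) (h : Hgrp p) :
    ⁅(inl (ofAdd w) : Hgrp p), h⁆
      = inl (ofAdd (w - (σ ^ (toAdd h.right) : AddAut (V p)) w)) := by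
  rw [comm_inl, φp_apply, ← ofAdd_neg, ← ofAdd_add, ← sub_eq_add_neg]

lemma σ_zpow_S_iter_comm (c : ℤ) (k : ℕ) (v : V p) :
    (⇑(S : V p →+ V p))^[k] ((σ ^ c : AddAut (V p)) v)
      = (σ ^ c : AddAut (V p)) ((⇑(S : V p →+ V p))^[k] v) := by
  induction k generalizing v with
  | zero => rfl
  | succ k ih => rw [Function.iterate_succ_apply, σ_zpow_S_comm, ih, ← Function.iterate_succ_apply]

def W (p k : ℕ) : Subgroup (Hgrp p) where
  carrier := {h | h.right = 1 ∧ ∃ v : V p, h.left = ofAdd ((⇑(S : V p →+ V p))^[k] v)}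
  one_mem' := ⟨rfl, 0, by simp [iterate_map_zero]⟩
  mul_mem' := by
    rintro a b ⟨ha1, va, ha2⟩ ⟨hb1, vb, hb2⟩
    refine ⟨by simp [mul_right, ha1, hb1], va + vb, ?_⟩
    rw [mul_left, ha2, hb2, ha1, map_one, MulAut.one_apply, ← ofAdd_add, iterate_map_add]
  inv_mem' := by
    rintro a ⟨ha1, va, ha2⟩
    refine ⟨by simp [inv_right, ha1], -va, ?_⟩
    rw [inv_left, ha1, inv_one, map_one, MulAut.one_apply, ha2, ← ofAdd_neg, iterate_map_neg]

lemma toAdd_φp (c : Multiplicative ℤ) (x : Multiplicative (V p)) :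
    toAdd (φp p c x) = (σ ^ toAdd c : AddAut (V p)) (toAdd x) := rfl

lemma mem_W {k : ℕ} {h : Hgrp p} :
    h ∈ W p k ↔ (h.right = 1 ∧ ∃ v : V p, h.left = ofAdd ((⇑(S : V p →+ V p))^[k] v)) :=
  Iff.rfl

lemma eq_inl_of_right_eq_one {h : Hgrp p} (hr : h.right = 1) : h = inl h.left := by
  conv_lhs => rw [← inl_left_mul_inr_right h]
  rw [hr, map_one, mul_one]

lemma comm_mem_W1 (g₁ g₂ : Hgrp p) : ⁅g₁, g₂⁆ ∈ W p 1 := by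
  have hr : (⁅g₁, g₂⁆ : Hgrp p).right = 1 := by
    have h1 : rightHom ⁅g₁, g₂⁆ = ⁅rightHom g₁, rightHom g₂⁆ := map_commutatorElement _ _ _
    have h2 : ⁅rightHom g₁, rightHom g₂⁆ = 1 :=
      commutatorElement_eq_one_iff_commute.mpr (mul_comm _ _)
    rw [← rightHom_eq_right]
    rw [h1, h2]
  refine ⟨hr, ?_⟩
  simp only [commutatorElement_def, mul_left, mul_right, inv_left, inv_right]
  obtain ⟨u₁, hu₁⟩ := σ_zpow_sub_range (toAdd g₂.right) (toAdd g₁.left)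
  obtain ⟨u₂, hu₂⟩ := σ_zpow_sub_range (toAdd g₁.right) (toAdd g₂.left)
  refine ⟨u₂ - u₁, ?_⟩
  have e1 : (φp p (g₁.right * g₂.right)) ((φp p g₁.right⁻¹) g₁.left⁻¹)
      = (φp p g₂.right) g₁.left⁻¹ := by
    rw [← MulAut.mul_apply, ← map_mul]
    congr 2
    rw [mul_comm g₁.right g₂.right, mul_assoc, mul_inv_cancel, mul_one]
  have e2 : (φp p (g₁.right * g₂.right * g₁.right⁻¹)) ((φp p g₂.right⁻¹) g₂.left⁻¹)
      = g₂.left⁻¹ := by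
    rw [← MulAut.mul_apply, ← map_mul,
      show g₁.right * g₂.right * g₁.right⁻¹ * g₂.right⁻¹ = 1 by
        rw [mul_comm g₁.right g₂.right]; group, map_one, MulAut.one_apply]
  rw [e1, e2]
  apply Multiplicative.toAdd.injective
  simp only [toAdd_mul, toAdd_inv, toAdd_φp, toAdd_ofAdd, map_neg, Function.iterate_one]
  rw [hu₁, hu₂, map_sub]
  abel

lemma lcs_le_W : ∀ k, (⊤ : Subgroup (Hgrp p)).lowerCentralSeries (k + 1) ≤ W p (k + 1) := by
  intro k
  induction k with
  | zero =>
    rw [lcs_succ', Subgroup.lowerCentralSeries_zero]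
    exact Subgroup.commutator_le.mpr fun g₁ _ g₂ _ => comm_mem_W1 g₁ g₂
  | succ k ih =>
    rw [lcs_succ']
    refine Subgroup.commutator_le.mpr fun g₁ hg₁ g₂ _ => ?_
    obtain ⟨hr, v, hl⟩ := ih hg₁
    have hg : g₁ = inl (ofAdd ((⇑(S : V p →+ V p))^[k + 1] v)) := by
      rw [eq_inl_of_right_eq_one hr, hl]
    rw [hg, comm_inl']
    obtain ⟨u, hu⟩ := σ_zpow_sub_range (toAdd g₂.right) v
    have hvec : (⇑(S : V p →+ V p))^[k + 1] v
        - (σ ^ toAdd g₂.right : AddAut (V p)) ((⇑(S : V p →+ V p))^[k + 1] v)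
        = (⇑(S : V p →+ V p))^[k + 1 + 1] (-u) := by
      rw [← σ_zpow_S_iter_comm, hu, iterate_map_add]
      rw [show (⇑(S : V p →+ V p))^[k + 1 + 1] (-u) = (⇑(S : V p →+ V p))^[k+1] (S (-u))
        from Function.iterate_succ_apply _ _ _]
      rw [map_neg, iterate_map_neg]
      abel
    rw [hvec]
    exact ⟨right_inl _, -u, left_inl _⟩

lemma lcs_p_bot (hp1 : 1 ≤ p) : (⊤ : Subgroup (Hgrp p)).lowerCentralSeries p = ⊥ := by
  rw [eq_bot_iff]
  intro x hx
  have h := lcs_le_W (p - 1) (by rw [show p - 1 + 1 = p by omega]; exact hx)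
  obtain ⟨hr, v, hl⟩ := h
  rw [show p - 1 + 1 = p by omega] at hl
  rw [S_iter_p] at hl
  have : x = 1 := by
    rw [eq_inl_of_right_eq_one hr, hl]
    simp
  simp [this]

section Maps
variable {G G' : Type*} [Group G] [Group G']

lemma lcs_map_surj (f : G →* G') (hf : Function.Surjective f) (n : ℕ) :
    Subgroup.map f ((⊤ : Subgroup G).lowerCentralSeries n) = (⊤ : Subgroup G').lowerCentralSeries n := by
  induction n with
  | zero =>
    rw [Subgroup.lowerCentralSeries_zero, Subgroup.lowerCentralSeries_zero, Subgroup.map_top_of_surjective f hf]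
  | succ n ih =>
    rw [lcs_succ', lcs_succ', Subgroup.map_commutator, ih,
      Subgroup.map_top_of_surjective f hf]

lemma map_nestedCommutator (f : G →* G') (l : List G) :
    f (nestedCommutator l) = nestedCommutator (l.map f) := by
  cases l with
  | nil => simp [nestedCommutator]
  | cons x xs =>
    show f (xs.foldl _ x) = (xs.map f).foldl _ (f x)
    induction xs generalizing x with
    | nil => rfl
    | cons y ys ih =>
      simp only [List.foldl_cons, List.map_cons]
      rw [← map_commutatorElement]
      exact ih _

end Maps

def ψ0 (p q : ℕ) : FreeGroup (Fin q) →* Hgrp p :=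
  FreeGroup.lift fun i =>
    if (i : ℕ) = 0 then inl (ofAdd (e p 0)) else if (i : ℕ) = 1 then inr (ofAdd (1 : ℤ)) else 1

lemma ψ0_ker (p q : ℕ) (hp1 : 1 ≤ p) :
    (⊤ : Subgroup (FreeGroup (Fin q))).lowerCentralSeries p ≤ (ψ0 p q).ker := by
  intro x hx
  have h1 : ψ0 p q x ∈ Subgroup.map (ψ0 p q) ((⊤ : Subgroup (FreeGroup (Fin q))).lowerCentralSeries p) :=
    ⟨x, hx, rfl⟩
  have h2 := Subgroup.lowerCentralSeries.map (ψ0 p q) p h1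
  rw [lcs_p_bot hp1] at h2
  exact MonoidHom.mem_ker.mpr (Subgroup.mem_bot.mp h2)

def ψ (p q : ℕ) (hp1 : 1 ≤ p) : FreeNilpotent p q →* Hgrp p :=
  QuotientGroup.lift _ (ψ0 p q) (ψ0_ker p q hp1)

lemma ψ_gen (p q : ℕ) (hp1 : 1 ≤ p) (i : Fin q) :
    ψ p q hp1 (FreeNilpotent.gen p q i)
      = (if (i : ℕ) = 0 then inl (ofAdd (e p 0)) else if (i : ℕ) = 1 then inr (ofAdd (1 : ℤ)) else 1) := by
  show ψ0 p q (FreeGroup.of i) = _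
  show (FreeGroup.lift _) (FreeGroup.of i) = _
  rw [FreeGroup.lift_apply_of]

lemma inl_ofAdd_congr {v w : V p} (h : v = w) :
    (inl (ofAdd v) : Hgrp p) = inl (ofAdd w) := by rw [h]

lemma H_comm_e_inr (j : ℕ) :
    ⁅(inl (ofAdd (e p j)) : Hgrp p), (inr (ofAdd (1 : ℤ)) : Hgrp p)⁆
      = inl (ofAdd (e p (j + 1))) := by
  rw [comm_inl', right_inr, toAdd_ofAdd, zpow_one, σ_apply, sub_sub_cancel, S_e]

lemma H_nested (j m : ℕ) :
    nestedCommutator ((inl (ofAdd (e p j)) : Hgrp p) :: List.replicate m (inr (ofAdd (1 : ℤ))))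
      = inl (ofAdd (e p (j + m))) := by
  induction m generalizing j with
  | zero => rfl
  | succ m ih =>
    show (List.replicate (m + 1) _).foldl _ _ = _
    rw [List.replicate_succ, List.foldl_cons, H_comm_e_inr]
    exact (ih (j + 1)).trans (by rw [show j + 1 + m = j + (m + 1) by omega])

variable (hp : 3 ≤ p)
include hp

lemma H_RBB :
    ⁅⁅(inl (ofAdd (e p (p - 3))) : Hgrp p), (inr (ofAdd (1 : ℤ)) : Hgrp p)⁆,
        (inr (ofAdd (1 : ℤ)) : Hgrp p)⁆ = inl (ofAdd (e p (p - 1))) := by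
  rw [H_comm_e_inr, H_comm_e_inr, show p - 3 + 1 + 1 = p - 1 by omega]

lemma H_RBY (h : Hgrp p) :
    ⁅⁅(inl (ofAdd (e p (p - 3))) : Hgrp p), (inr (ofAdd (1 : ℤ)) : Hgrp p)⁆, h⁆
      = inl (ofAdd ((toAdd h.right) • e p (p - 1))) := by
  rw [H_comm_e_inr, show p - 3 + 1 = p - 2 by omega, comm_inl']
  have hS2 : S (S (e p (p - 2))) = 0 := by
      rw [S_e, S_e, show p - 2 + 1 + 1 = p by omega, e_zero_of_ge _ le_rfl]
  rw [σ_zpow_lin _ _ hS2, S_e, show p - 2 + 1 = p - 1 by omega]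
  exact inl_ofAdd_congr (by abel)

lemma H_RYY (h h' : Hgrp p) :
    ⁅⁅(inl (ofAdd (e p (p - 3))) : Hgrp p), h⁆, h'⁆
      = inl (ofAdd ((toAdd h.right * toAdd h'.right) • e p (p - 1))) := by
  rw [comm_inl']
  have hS3 : S (S (S (e p (p - 3)))) = 0 := by
    rw [S_e, S_e, S_e, show p - 3 + 1 + 1 + 1 = p by omega, e_zero_of_ge _ le_rfl]
  obtain ⟨d, hd⟩ := σ_zpow_quad (toAdd h.right) _ hS3
  rw [hd]
  have hv : e p (p - 3) - (e p (p - 3) - toAdd h.right • S (e p (p - 3)) + d • S (S (e p (p - 3))))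
      = toAdd h.right • e p (p - 2) - d • e p (p - 1) := by
    rw [S_e, S_e, show p - 3 + 1 = p - 2 by omega, show p - 2 + 1 = p - 1 by omega]
    abel
  rw [hv, comm_inl']
  have hS2 : S (S (toAdd h.right • e p (p - 2) - d • e p (p - 1))) = 0 := by
    rw [map_sub, map_zsmul, map_zsmul, S_e, S_e, map_sub, map_zsmul, map_zsmul, S_e, S_e,
      show p - 2 + 1 + 1 = p by omega, show p - 1 + 1 + 1 = p + 1 by omega,
      e_zero_of_ge _ le_rfl, e_zero_of_ge _ (by omega), smul_zero, smul_zero, sub_zero]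
  rw [σ_zpow_lin _ _ hS2]
  apply inl_ofAdd_congr
  rw [map_sub, map_zsmul, map_zsmul, S_e, S_e, show p - 2 + 1 = p - 1 by omega,
    show p - 1 + 1 = p by omega, e_zero_of_ge _ le_rfl, smul_zero, sub_zero, smul_smul,
    mul_comm (toAdd h'.right)]
  abel

omit hp

section Gside

variable {Γ : Type*} [Group Γ] {k : ℕ}

lemma comm_mem {z g : Γ} {n : ℕ} (hz : z ∈ (⊤ : Subgroup Γ).lowerCentralSeries n) :
    ⁅z, g⁆ ∈ (⊤ : Subgroup Γ).lowerCentralSeries (n + 1) :=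
  (lcs_succ' (G := Γ) n) ▸ Subgroup.commutator_mem_commutator hz (Subgroup.mem_top g)

variable (hbot : (⊤ : Subgroup Γ).lowerCentralSeries (k + 3) = ⊥)
include hbot

lemma central_commute {c : Γ} (hc : c ∈ (⊤ : Subgroup Γ).lowerCentralSeries (k + 2)) (g : Γ) :
    Commute c g := by
  have h1 : ⁅c, g⁆ ∈ (⊤ : Subgroup Γ).lowerCentralSeries (k + 3) := comm_mem hc
  rw [hbot, Subgroup.mem_bot] at h1
  exact commutatorElement_eq_one_iff_commute.mp h1

lemma conj_central {c : Γ} (hc : c ∈ (⊤ : Subgroup Γ).lowerCentralSeries (k + 2)) (g : Γ) :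
    g * c * g⁻¹ = c := by
  rw [(central_commute hbot hc g).symm.eq, mul_assoc, mul_inv_cancel, mul_one]

lemma comm_mul_second {z : Γ} (hz : z ∈ (⊤ : Subgroup Γ).lowerCentralSeries (k + 1)) (g h : Γ) :
    ⁅z, g * h⁆ = ⁅z, g⁆ * ⁅z, h⁆ := by
  have h1 : ⁅z, g * h⁆ = ⁅z, g⁆ * (g * ⁅z, h⁆ * g⁻¹) := by group
  rw [h1, conj_central hbot (comm_mem hz) g]

/-- The map `g ↦ ⁅z, g⁆` as a monoid hom, for `z ∈ γ_{k+1}`. -/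
def commHom {z : Γ} (hz : z ∈ (⊤ : Subgroup Γ).lowerCentralSeries (k + 1)) : Γ →* Γ :=
  MonoidHom.mk' (fun g => ⁅z, g⁆) (comm_mul_second hbot hz)

lemma comm_zpow_second {z : Γ} (hz : z ∈ (⊤ : Subgroup Γ).lowerCentralSeries (k + 1)) (g : Γ) (N : ℤ) :
    ⁅z, g ^ N⁆ = ⁅z, g⁆ ^ N :=
  map_zpow (commHom hbot hz) g N

lemma comm_mul_first {z z' g : Γ} (hz : z ∈ (⊤ : Subgroup Γ).lowerCentralSeries (k + 1))
    (hz' : z' ∈ (⊤ : Subgroup Γ).lowerCentralSeries (k + 1)) :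
    ⁅z * z', g⁆ = ⁅z, g⁆ * ⁅z', g⁆ := by
  have h1 : ⁅z * z', g⁆ = (z * ⁅z', g⁆ * z⁻¹) * ⁅z, g⁆ := by group
  rw [h1, conj_central hbot (comm_mem hz') z]
  exact (central_commute hbot (comm_mem hz') ⁅z, g⁆).eq

/-- The map `z ↦ ⁅z, g⁆` as a monoid hom on `γ_{k+1}`. -/
def commHom' (g : Γ) : (⊤ : Subgroup Γ).lowerCentralSeries (k + 1) →* Γ :=
  MonoidHom.mk' (fun z => ⁅(z : Γ), g⁆)
    (fun z z' => comm_mul_first hbot z.2 z'.2)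

lemma comm_zpow_first {z g : Γ} (hz : z ∈ (⊤ : Subgroup Γ).lowerCentralSeries (k + 1)) (N : ℤ) :
    ⁅z ^ N, g⁆ = ⁅z, g⁆ ^ N := by
  have h1 := map_zpow (commHom' hbot g) (⟨z, hz⟩ : (⊤ : Subgroup Γ).lowerCentralSeries (k + 1)) N
  exact h1

lemma conj_form {z : Γ} (hz : z ∈ (⊤ : Subgroup Γ).lowerCentralSeries (k + 1)) (u : Γ) :
    u * z * u⁻¹ = z * ⁅z⁻¹, u⁆ :=
  by group

lemma conj_form_mem {z : Γ} (hz : z ∈ (⊤ : Subgroup Γ).lowerCentralSeries (k + 1)) (u : Γ) :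
    ⁅z⁻¹, u⁆ ∈ (⊤ : Subgroup Γ).lowerCentralSeries (k + 2) :=
  comm_mem (((⊤ : Subgroup Γ).lowerCentralSeries (k + 1)).inv_mem hz)

lemma comm_central_first {z c g : Γ} (hc : c ∈ (⊤ : Subgroup Γ).lowerCentralSeries (k + 2)) :
    ⁅z * c, g⁆ = ⁅z, g⁆ := by
  have h1 : ⁅z * c, g⁆ = z * (c * g * c⁻¹) * z⁻¹ * g⁻¹ := by group
  have h2 : c * g * c⁻¹ = g := by
    rw [(central_commute hbot hc g).eq, mul_assoc, mul_inv_cancel, mul_one]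
  rw [h1, h2]
  group

lemma comm_R_zpow {R b : Γ} (hR : R ∈ (⊤ : Subgroup Γ).lowerCentralSeries k) (N : ℤ) :
    ∃ c ∈ (⊤ : Subgroup Γ).lowerCentralSeries (k + 2), ⁅R, b ^ N⁆ = ⁅R, b⁆ ^ N * c := by
  have hw : ⁅R, b⁆ ∈ (⊤ : Subgroup Γ).lowerCentralSeries (k + 1) := comm_mem hR
  have idR : ∀ g h : Γ, ⁅R, g * h⁆ = ⁅R, g⁆ * (g * ⁅R, h⁆ * g⁻¹) := by intros; group
  set w := ⁅R, b⁆ with hw_def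
  induction N using Int.induction_on with
  | zero => exact ⟨1, ((⊤ : Subgroup Γ).lowerCentralSeries (k + 2)).one_mem, by simp⟩
  | succ i ih =>
    obtain ⟨c, hc, hcomm⟩ := ih
    have hconj : b * w * b⁻¹ = w * ⁅w⁻¹, b⁆ := conj_form hbot hw b
    have hd : ⁅w⁻¹, b⁆ ∈ (⊤ : Subgroup Γ).lowerCentralSeries (k + 2) := conj_form_mem hbot hw b
    set d := ⁅w⁻¹, b⁆ with hdd
    refine ⟨d ^ (i : ℤ) * c,
      Subgroup.mul_mem _ (Subgroup.zpow_mem _ hd _) hc, ?_⟩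
    have hcomd : ∀ g : Γ, Commute d g := central_commute hbot hd
    calc ⁅R, b ^ ((i : ℤ) + 1)⁆
        = ⁅R, b * b ^ (i : ℤ)⁆ := by
          rw [show ((i : ℤ) + 1) = 1 + (i : ℤ) by ring, zpow_add, zpow_one]
      _ = w * (b * (w ^ (i : ℤ) * c) * b⁻¹) := by rw [idR, hcomm]
      _ = w * ((b * w ^ (i : ℤ) * b⁻¹) * (b * c * b⁻¹)) := by group
      _ = w * ((b * w * b⁻¹) ^ (i : ℤ) * c) := by
          rw [conj_central hbot hc b]
          congr 2
          simpa using (map_zpow (MulAut.conj b) w (i : ℤ)).symm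
      _ = w * (w ^ (i : ℤ) * d ^ (i : ℤ) * c) := by
          rw [hconj, (hcomd w).symm.mul_zpow]
      _ = w ^ ((i : ℤ) + 1) * (d ^ (i : ℤ) * c) := by
          rw [show ((i : ℤ) + 1) = 1 + (i : ℤ) by ring, zpow_add, zpow_one]
          group
  | pred i ih =>
    obtain ⟨c, hc, hcomm⟩ := ih
    have hconj : b⁻¹ * w * b = w * ⁅w⁻¹, b⁻¹⁆ := by
      have := conj_form hbot hw b⁻¹
      rwa [inv_inv] at this
    have hd : ⁅w⁻¹, b⁻¹⁆ ∈ (⊤ : Subgroup Γ).lowerCentralSeries (k + 2) := conj_form_mem hbot hw b⁻¹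
    set d := ⁅w⁻¹, b⁻¹⁆ with hdd
    have hcomd : ∀ g : Γ, Commute d g := central_commute hbot hd
    have hinv : ⁅R, b⁻¹⁆ = w⁻¹ * d⁻¹ := by
      have h1 : ⁅R, b⁻¹⁆ = (b⁻¹ * w * b)⁻¹ := by rw [hw_def]; group
      rw [h1, hconj, mul_inv_rev]
      exact ((hcomd w⁻¹).inv_left.eq)
    refine ⟨d⁻¹ * d ^ (-(i : ℤ)) * c,
      Subgroup.mul_mem _ (Subgroup.mul_mem _ (((⊤ : Subgroup Γ).lowerCentralSeries (k + 2)).inv_mem hd)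
        (Subgroup.zpow_mem _ hd _)) hc, ?_⟩
    calc ⁅R, b ^ (-(i : ℤ) - 1)⁆
        = ⁅R, b⁻¹ * b ^ (-(i : ℤ))⁆ := by
          rw [show (-(i : ℤ) - 1) = -1 + (-(i : ℤ)) by ring, zpow_add]
          norm_num
      _ = (w⁻¹ * d⁻¹) * (b⁻¹ * (w ^ (-(i : ℤ)) * c) * b) := by
          have := idR b⁻¹ (b ^ (-(i : ℤ)))
          rw [inv_inv] at this
          rw [this, hinv, hcomm]
      _ = (w⁻¹ * d⁻¹) * ((b⁻¹ * w ^ (-(i : ℤ)) * b) * (b⁻¹ * c * b)) := by group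
      _ = (w⁻¹ * d⁻¹) * ((b⁻¹ * w * b) ^ (-(i : ℤ)) * c) := by
          have h2 : b⁻¹ * c * b = c := by
            have := conj_central hbot hc b⁻¹
            rwa [inv_inv] at this
          rw [h2]
          congr 2
          have := map_zpow (MulAut.conj b⁻¹) w (-(i : ℤ))
          simpa using this
      _ = (w⁻¹ * d⁻¹) * (w ^ (-(i : ℤ)) * d ^ (-(i : ℤ)) * c) := by
          rw [hconj, (hcomd w).symm.mul_zpow]
      _ = w ^ (-(i : ℤ) - 1) * (d⁻¹ * d ^ (-(i : ℤ)) * c) := by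
          rw [show (-(i : ℤ) - 1) = -1 + (-(i : ℤ)) by ring, zpow_add, zpow_neg_one]
          have h3 : d⁻¹ * (w ^ (-(i : ℤ))) = w ^ (-(i : ℤ)) * d⁻¹ :=
            ((hcomd (w ^ (-(i : ℤ)))).inv_left).eq
          calc w⁻¹ * d⁻¹ * (w ^ (-(i : ℤ)) * d ^ (-(i : ℤ)) * c)
              = w⁻¹ * (d⁻¹ * w ^ (-(i : ℤ))) * (d ^ (-(i : ℤ)) * c) := by group
            _ = w⁻¹ * (w ^ (-(i : ℤ)) * d⁻¹) * (d ^ (-(i : ℤ)) * c) := by rw [h3]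
            _ = w⁻¹ * w ^ (-(i : ℤ)) * (d⁻¹ * d ^ (-(i : ℤ)) * c) := by group

lemma G_RBY {R b : Γ} (hR : R ∈ (⊤ : Subgroup Γ).lowerCentralSeries k) (t : ℤ) :
    ⁅⁅R, b⁆, b ^ t⁆ = ⁅⁅R, b⁆, b⁆ ^ t :=
  comm_zpow_second hbot (comm_mem hR) b t

lemma G_RYY {R b : Γ} (hR : R ∈ (⊤ : Subgroup Γ).lowerCentralSeries k) (s t : ℤ) :
    ⁅⁅R, b ^ s⁆, b ^ t⁆ = ⁅⁅R, b⁆, b⁆ ^ (s * t) := by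
  have hw : ⁅R, b⁆ ∈ (⊤ : Subgroup Γ).lowerCentralSeries (k + 1) := comm_mem hR
  obtain ⟨c, hc, hcomm⟩ := comm_R_zpow hbot hR s
  rw [hcomm, comm_central_first hbot hc, comm_zpow_first hbot hw,
    comm_zpow_second hbot hw, ← zpow_mul, mul_comm t s]

end Gside

lemma nested_mem {Γ : Type*} [Group Γ] (x y : Γ) (kk : ℕ) :
    nestedCommutator (x :: List.replicate kk y) ∈ (⊤ : Subgroup Γ).lowerCentralSeries kk := by
  induction kk with
  | zero => exact Subgroup.mem_top _
  | succ kk ih =>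
    rw [List.replicate_succ']
    show ((List.replicate kk y) ++ [y]).foldl _ x ∈ _
    rw [List.foldl_append]
    exact comm_mem ih

lemma FN_lcs_bot (p q : ℕ) : (⊤ : Subgroup (FreeNilpotent p q)).lowerCentralSeries p = ⊥ := by
  have hs : Function.Surjective
      (QuotientGroup.mk' ((⊤ : Subgroup (FreeGroup (Fin q))).lowerCentralSeries p)) :=
    QuotientGroup.mk'_surjective _
  have h := lcs_map_surj _ hs p
  show (⊤ : Subgroup
    (FreeGroup (Fin q) ⧸ (⊤ : Subgroup (FreeGroup (Fin q))).lowerCentralSeries p)).lowerCentralSeries p = ⊥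
  rw [← h, Subgroup.map_eq_bot_iff, QuotientGroup.ker_mk']

lemma inl_zpow {p : ℕ} (v : V p) (N : ℤ) :
    (inl (ofAdd v) : Hgrp p) ^ N = inl (ofAdd (N • v)) := by
  rw [ofAdd_zsmul, map_zpow]

lemma prod_ofFn_inl {p r : ℕ} (g : Fin r → V p) :
    (List.ofFn fun j => (inl (ofAdd (g j)) : Hgrp p)).prod = inl (ofAdd (∑ j, g j)) := by
  induction r with
  | zero => simp
  | succ r ih =>
    rw [List.ofFn_succ, List.prod_cons, ih, ← map_mul]
    congr 1
    rw [← ofAdd_add, Fin.sum_univ_succ]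

lemma zpow_prod_ofFn {M : Type*} [Group M] (T : M) {r : ℕ} (g : Fin r → ℤ) :
    (List.ofFn fun j => T ^ g j).prod = T ^ (∑ j, g j) := by
  induction r with
  | zero => simp
  | succ r ih => rw [List.ofFn_succ, List.prod_cons, ih, ← zpow_add, Fin.sum_univ_succ]

end FNEnc

open FNEnc SemidirectProduct Multiplicative

/-- In `N(p,q)` with `p ≥ 3`, `q ≥ 2`, write `a = a_1`, `b = a_2` and let
`R = ⁅a, b, b, …, b⁆` be the left-nested iterated commutator with `p - 2` entries in total
(so `R = a` when `p = 3`).  The system of group equations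
`⁅R,b,b⁆^(α i) ⬝ ∏_j ⁅R,b,y_j⁆^(β i j) ⬝ ∏_{j,k} ⁅R,y_j,y_k⁆^(γ i j k) = 1` has a solution
in `N(p,q)` iff the corresponding system of quadratic diophantine equations has an integer
solution.  (All listed factors lie in the central subgroup
`(⊤ : Subgroup (N(p,q))).lowerCentralSeries (p-1)`, so the order of the products is immaterial; we fix the
order given by increasing indices.) -/
theorem free_nilpotent_higher_step_system_encodes_quadratic_system
    (p q : ℕ) (hp : 3 ≤ p) (hq : 2 ≤ q)
    (n m : ℕ) (α : Fin n → ℤ) (β : Fin n → Fin m → ℤ) (γ : Fin n → Fin m → Fin m → ℤ) :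
    (∃ y : Fin m → FreeNilpotent p q,
      ∀ i,
        ⁅⁅nestedCommutator (FreeNilpotent.gen p q ⟨0, by omega⟩ ::
            List.replicate (p - 3) (FreeNilpotent.gen p q ⟨1, by omega⟩)),
          FreeNilpotent.gen p q ⟨1, by omega⟩⁆, FreeNilpotent.gen p q ⟨1, by omega⟩⁆ ^ (α i) *
        (List.ofFn fun j =>
          ⁅⁅nestedCommutator (FreeNilpotent.gen p q ⟨0, by omega⟩ ::
              List.replicate (p - 3) (FreeNilpotent.gen p q ⟨1, by omega⟩)),
            FreeNilpotent.gen p q ⟨1, by omega⟩⁆, y j⁆ ^ (β i j)).prod *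
        (List.ofFn fun j => (List.ofFn fun k =>
          ⁅⁅nestedCommutator (FreeNilpotent.gen p q ⟨0, by omega⟩ ::
              List.replicate (p - 3) (FreeNilpotent.gen p q ⟨1, by omega⟩)),
            y j⁆, y k⁆ ^ (γ i j k)).prod).prod = 1)
    ↔ (∃ x : Fin m → ℤ,
        ∀ i, α i + (∑ j, β i j * x j) + (∑ j, ∑ k, γ i j k * x j * x k) = 0) := by
  have hp1 : 1 ≤ p := by omega
  set gen0 : FreeNilpotent p q := FreeNilpotent.gen p q ⟨0, by omega⟩ with hgen0
  set gen1 : FreeNilpotent p q := FreeNilpotent.gen p q ⟨1, by omega⟩ with hgen1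
  set R : FreeNilpotent p q := nestedCommutator (gen0 :: List.replicate (p - 3) gen1) with hRdef
  constructor
  · rintro ⟨y, hy⟩
    set Ψ := FNEnc.ψ p q hp1 with hΨ
    set x : Fin m → ℤ := fun j => toAdd ((Ψ (y j)).right) with hxdef
    refine ⟨x, fun i => ?_⟩
    have hg0 : Ψ gen0 = inl (ofAdd (e p 0)) := by
      rw [hgen0, FNEnc.ψ_gen]
      simp
    have hg1 : Ψ gen1 = inr (ofAdd (1 : ℤ)) := by
      rw [hgen1, FNEnc.ψ_gen]
      simp
    have hR : Ψ R = inl (ofAdd (e p (p - 3))) := by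
      rw [hRdef, FNEnc.map_nestedCommutator, List.map_cons, List.map_replicate, hg0, hg1]
      have h := FNEnc.H_nested (p := p) 0 (p - 3)
      rwa [zero_add] at h
    have hT : Ψ ⁅⁅R, gen1⁆, gen1⁆ = inl (ofAdd (e p (p - 1))) := by
      rw [map_commutatorElement, map_commutatorElement, hR, hg1]
      exact FNEnc.H_RBB hp
    have hBY : ∀ j, Ψ ⁅⁅R, gen1⁆, y j⁆ = inl (ofAdd (x j • e p (p - 1))) := fun j => by
      rw [map_commutatorElement, map_commutatorElement, hR, hg1]
      exact FNEnc.H_RBY hp _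
    have hYY : ∀ j k', Ψ ⁅⁅R, y j⁆, y k'⁆
        = inl (ofAdd ((x j * x k') • e p (p - 1))) := fun j k' => by
      rw [map_commutatorElement, map_commutatorElement, hR]
      exact FNEnc.H_RYY hp _ _
    have h := congrArg Ψ (hy i)
    rw [map_one, map_mul, map_mul, map_zpow, map_list_prod, map_list_prod, hT] at h
    simp only [List.map_ofFn, Function.comp_def, map_zpow, map_list_prod, List.map_ofFn] at h
    simp only [hBY, hYY] at h
    simp only [FNEnc.inl_zpow, FNEnc.prod_ofFn_inl] at h
    rw [← map_mul, ← map_mul, ← ofAdd_add, ← ofAdd_add] at h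
    have h0 := ofAdd_eq_one.mp (SemidirectProduct.inl_injective (h.trans (map_one inl).symm))
    have h1 := congrFun h0 ⟨p - 1, by omega⟩
    simp only [Pi.add_apply, Pi.smul_apply, Finset.sum_apply, Pi.zero_apply, smul_eq_mul,
      FNEnc.e, if_pos rfl, if_true, mul_one] at h1
    rw [show (∑ j, ∑ k, γ i j k * x j * x k) = ∑ j, ∑ k, γ i j k * (x j * x k) by
      refine Finset.sum_congr rfl fun j _ => Finset.sum_congr rfl fun k _ => by ring]
    exact h1
  · rintro ⟨x, hx⟩
    refine ⟨fun j => gen1 ^ (x j), fun i => ?_⟩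
    have hbot : (⊤ : Subgroup (FreeNilpotent p q)).lowerCentralSeries ((p - 3) + 3) = ⊥ := by
      rw [show p - 3 + 3 = p by omega]
      exact FNEnc.FN_lcs_bot p q
    have hRmem : R ∈ (⊤ : Subgroup (FreeNilpotent p q)).lowerCentralSeries (p - 3) :=
      hRdef ▸ FNEnc.nested_mem gen0 gen1 (p - 3)
    have h1 : ∀ j, ⁅⁅R, gen1⁆, gen1 ^ x j⁆ = ⁅⁅R, gen1⁆, gen1⁆ ^ x j := fun j =>
      FNEnc.G_RBY hbot hRmem (x j)
    have h2 : ∀ j k', ⁅⁅R, gen1 ^ x j⁆, gen1 ^ x k'⁆ = ⁅⁅R, gen1⁆, gen1⁆ ^ (x j * x k') :=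
      fun j k' => FNEnc.G_RYY hbot hRmem (x j) (x k')
    simp only [h1, h2, ← zpow_mul]
    simp only [FNEnc.zpow_prod_ofFn]
    rw [← zpow_add, ← zpow_add]
    rw [show (α i + (∑ j, x j * β i j) + ∑ j, ∑ k, x j * x k * γ i j k) = 0 from ?_, zpow_zero]
    rw [show (∑ j, x j * β i j) = ∑ j, β i j * x j by
        exact Finset.sum_congr rfl fun j _ => by ring,
      show (∑ j, ∑ k, x j * x k * γ i j k) = ∑ j, ∑ k, γ i j k * x j * x k by
        refine Finset.sum_congr rfl fun j _ => Finset.sum_congr rfl fun k _ => by ring]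
    exact hx i
end
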